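/- arXiv:2508.06264 — 4 statements merged into one kernel-verified Lean document; each statement's English description precedes it below -/
import Mathlib

section
/- Consider arithmetic expressions over nonnegative rational constants with binary addition and binary multiplication, where each expression φ is assigned a set of variables V(φ) with the property that multiplications are decomposable (disjoint variable sets) and each addition has the form (x·φ₁) + (x̄·φ₂) with x ∉ V(φ₁) ∪ V(φ₂). If |V(φ)| = n ≤ 1/(2√ε) and each leaf constant is approximated with relative error at most ε, and each operation introduces relative error consistent with floating-point rounding (multiplication adds 2 units of ε after propagating the sum of argument errors; addition adds 1 unit after propagating the maximum), then the evaluated approximation Ŵ(φ) satisfies δ[Ŵ(φ), W(φ)] ≤ (4n - 2)·ε. -/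
/-- Relative approximation error. -/
noncomputable def relErr (xh x : ℝ) : ℝ :=
  if x = 0 then (if xh = 0 then 0 else 1) else |xh - x| / |x|

/-- Decision-DNNF formulas: literals, (decomposable) conjunctions, and decision
disjunctions `(x ∧ φ₁) ∨ (x̄ ∧ φ₂)`. -/
inductive DFormula : Type where
  | lit : ℕ → Bool → DFormula
  | conj : DFormula → DFormula → DFormula
  | dec : ℕ → DFormula → DFormula → DFormula

namespace DFormula

/-- The set of variables of a formula. -/
def vars : DFormula → Finset ℕ
  | lit x _ => {x}
  | conj f g => vars f ∪ vars g
  | dec x f g => insert x (vars f ∪ vars g)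

/-- Decomposability: conjunctions have disjoint variable sets, and a decision
variable does not occur in either branch. -/
def Decomposable : DFormula → Prop
  | lit _ _ => True
  | conj f g => Disjoint (vars f) (vars g) ∧ Decomposable f ∧ Decomposable g
  | dec x f g => x ∉ vars f ∪ vars g ∧ Decomposable f ∧ Decomposable g

/-- Exact arithmetic evaluation with literal weights `w`. -/
def eval (w : ℕ → Bool → ℝ) : DFormula → ℝ
  | lit x b => w x b
  | conj f g => eval w f * eval w g
  | dec x f g => w x true * eval w f + w x false * eval w g

end DFormula

/-!
Write `n` for the number of variables and measure errors relatively, as `|ŷ - y| ≤ δ·y`.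
Relative errors compose multiplicatively: a product of approximations with errors `s` and `t`
has error `(1 + s)(1 + t) - 1`, a rounding with unit `ε` multiplies `1 + δ` by `1 + ε`, and a sum
of nonnegative approximations keeps the larger error. By induction the error of a formula over
`n` variables is at most `(4n - 2)ε`: at a decomposable product the two bounds add up to
`(4n - 4)ε`, which leaves `2ε` for the rounding and the second-order terms; at a decision node
the subformulas have at most `n - 1` variables, which leaves `4ε` for the literal weight, two
roundings and the second-order terms. The condition `4n²ε ≤ 1` keeps the second-order terms
within these budgets.
-/

theorem relErr_le_of_abs_sub_le {xh x δ : ℝ} (hx : 0 ≤ x) (hδ : 0 ≤ δ)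
    (h : |xh - x| ≤ δ * x) : relErr xh x ≤ δ := by
  unfold relErr
  split_ifs with hx₀ hxh₀
  · exact hδ
  · subst hx₀
    rw [mul_zero, sub_zero, abs_nonpos_iff] at h
    exact absurd h hxh₀
  · rwa [div_le_iff₀ (abs_pos.mpr hx₀), abs_of_nonneg hx]

theorem abs_sub_le_of_relErr_le {xh x δ : ℝ} (hx : 0 ≤ x) (hδ : δ < 1)
    (h : relErr xh x ≤ δ) : |xh - x| ≤ δ * x := by
  unfold relErr at h
  split_ifs at h with hx₀ hxh₀
  · simp [hx₀, hxh₀]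
  · linarith
  · rwa [div_le_iff₀ (abs_pos.mpr hx₀), abs_of_nonneg hx] at h

theorem abs_mul_sub_mul_le {a b a' b' s t : ℝ} (ha : 0 ≤ a) (hb : 0 ≤ b)
    (h₁ : |a' - a| ≤ s * a) (h₂ : |b' - b| ≤ t * b) :
    |a' * b' - a * b| ≤ ((1 + s) * (1 + t) - 1) * (a * b) :=
  calc |a' * b' - a * b| = |(a' - a) * (b' - b) + (a' - a) * b + a * (b' - b)| := by ring_nf
    _ ≤ |(a' - a) * (b' - b)| + |(a' - a) * b| + |a * (b' - b)| := abs_add_three _ _ _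
    _ = |a' - a| * |b' - b| + |a' - a| * b + a * |b' - b| := by
        rw [abs_mul, abs_mul, abs_mul, abs_of_nonneg ha, abs_of_nonneg hb]
    _ ≤ s * a * (t * b) + s * a * b + a * (t * b) := by
        gcongr
        exact (abs_nonneg _).trans h₁
    _ = ((1 + s) * (1 + t) - 1) * (a * b) := by ring

theorem abs_sub_le_of_rounding {v p x ε δ : ℝ} (hε : 0 ≤ ε) (hx : 0 ≤ x)
    (hp : |p - x| ≤ δ * x) (hv : |v - p| ≤ ε * |p|) :
    |v - x| ≤ ((1 + ε) * (1 + δ) - 1) * x := by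
  have hp' : |p| ≤ (1 + δ) * x := by
    linarith [abs_sub_abs_le_abs_sub p x, abs_of_nonneg hx]
  calc |v - x| ≤ |v - p| + |p - x| := abs_sub_le v p x
    _ ≤ ε * ((1 + δ) * x) + δ * x := by
        gcongr
        exact hv.trans (by gcongr)
    _ = ((1 + ε) * (1 + δ) - 1) * x := by ring

theorem abs_round_mul_sub_mul_le {a b a' b' c ε s t : ℝ} (hε : 0 ≤ ε) (ha : 0 ≤ a)
    (hb : 0 ≤ b) (h₁ : |a' - a| ≤ s * a) (h₂ : |b' - b| ≤ t * b)
    (hc : |c - a' * b'| ≤ ε * |a' * b'|) :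
    |c - a * b| ≤ ((1 + ε) * ((1 + s) * (1 + t)) - 1) * (a * b) := by
  have h := abs_sub_le_of_rounding hε (mul_nonneg ha hb) (abs_mul_sub_mul_le ha hb h₁ h₂) hc
  rwa [add_sub_cancel] at h

theorem abs_round_add_sub_add_le {a b a' b' c ε δ : ℝ} (hε : 0 ≤ ε) (ha : 0 ≤ a)
    (hb : 0 ≤ b) (h₁ : |a' - a| ≤ δ * a) (h₂ : |b' - b| ≤ δ * b)
    (hc : |c - (a' + b')| ≤ ε * |a' + b'|) :
    |c - (a + b)| ≤ ((1 + ε) * (1 + δ) - 1) * (a + b) := by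
  have hsum : |a' + b' - (a + b)| ≤ δ * (a + b) :=
    calc |a' + b' - (a + b)| = |(a' - a) + (b' - b)| := by ring_nf
      _ ≤ |a' - a| + |b' - b| := abs_add_le _ _
      _ ≤ δ * (a + b) := by linarith
  exact abs_sub_le_of_rounding hε (add_nonneg ha hb) hsum hc

namespace DFormula

theorem conj_error_factor_le {ε x y : ℝ} (hε : 0 ≤ ε) (hx : 1 ≤ x) (hy : 1 ≤ y)
    (h : 4 * (x + y) ^ 2 * ε ≤ 1) :
    (1 + ε) * ((1 + (4 * x - 2) * ε) * (1 + (4 * y - 2) * ε)) ≤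
      1 + (4 * (x + y) - 2) * ε := by
  have hxy : 16 * x * y ≤ 4 * (x + y) ^ 2 := by nlinarith [sq_nonneg (x - y)]
  have hP : (4 * x - 2) * (4 * y - 2) * ε ≤ 1 := by nlinarith
  have key : (16 * x * y - 4 * (x + y)) * ε + (4 * x - 2) * (4 * y - 2) * ε * ε ≤ 1 := by
    nlinarith [mul_le_mul_of_nonneg_right hxy hε, mul_le_mul_of_nonneg_right hP hε]
  nlinarith [mul_le_mul_of_nonneg_left key hε]

theorem dec_error_factor_le {ε m : ℝ} (hε : 0 ≤ ε) (hm : 1 ≤ m)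
    (h : 4 * (m + 1) ^ 2 * ε ≤ 1) :
    (1 + ε) * ((1 + ε) * ((1 + ε) * (1 + (4 * m - 2) * ε))) ≤
      1 + (4 * (m + 1) - 2) * ε := by
  nlinarith [mul_nonneg hε hε, mul_nonneg (mul_nonneg hε hε) hε,
    mul_nonneg (mul_nonneg hε hε) (by linarith : (0 : ℝ) ≤ m)]

theorem one_le_card_vars (φ : DFormula) : 1 ≤ φ.vars.card := by
  induction φ with
  | lit x b => simp [vars]
  | conj f g hf _ => exact hf.trans (Finset.card_le_card Finset.subset_union_left)
  | dec x f g _ _ => exact Finset.card_pos.mpr ⟨x, Finset.mem_insert_self _ _⟩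

theorem eval_nonneg {w : ℕ → Bool → ℝ} (hw : ∀ x b, 0 ≤ w x b) (φ : DFormula) :
    0 ≤ φ.eval w := by
  induction φ with
  | lit x b => exact hw x b
  | conj f g hf hg => exact mul_nonneg hf hg
  | dec x f g hf hg =>
    exact add_nonneg (mul_nonneg (hw x true) hf) (mul_nonneg (hw x false) hg)

theorem abs_sub_eval_le {w wh : ℕ → Bool → ℝ} {Wh : DFormula → ℝ} {ε : ℝ} (hε : 0 ≤ ε)
    (hw : ∀ x b, 0 ≤ w x b) (hlit : ∀ x b, |wh x b - w x b| ≤ ε * w x b)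
    (hWlit : ∀ x b, Wh (.lit x b) = wh x b)
    (hconj : ∀ f g, |Wh (.conj f g) - Wh f * Wh g| ≤ ε * |Wh f * Wh g|)
    (hdec : ∀ x f g, ∃ v₁ v₂ : ℝ,
      |v₁ - wh x true * Wh f| ≤ ε * |wh x true * Wh f| ∧
      |v₂ - wh x false * Wh g| ≤ ε * |wh x false * Wh g| ∧
      |Wh (.dec x f g) - (v₁ + v₂)| ≤ ε * |v₁ + v₂|)
    (φ : DFormula) (hφ : φ.Decomposable) (hn : 4 * (φ.vars.card : ℝ) ^ 2 * ε ≤ 1) :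
    |Wh φ - φ.eval w| ≤ (4 * φ.vars.card - 2) * ε * φ.eval w := by
  have budget_mono {m n : ℕ} (hmn : m ≤ n) (h : 4 * (n : ℝ) ^ 2 * ε ≤ 1) :
      4 * (m : ℝ) ^ 2 * ε ≤ 1 :=
    le_trans (by gcongr) h
  induction φ with
  | lit x b =>
    simp only [vars, Finset.card_singleton, Nat.cast_one, eval, hWlit]
    linarith [hlit x b, mul_nonneg hε (hw x b)]
  | conj f g ihf ihg =>
    obtain ⟨hfg, hf, hg⟩ := hφ
    have hcard : (conj f g).vars.card = f.vars.card + g.vars.card :=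
      Finset.card_union_of_disjoint hfg
    rw [hcard] at hn ⊢
    have ef := ihf hf (budget_mono (Nat.le_add_right _ _) hn)
    have eg := ihg hg (budget_mono (Nat.le_add_left _ _) hn)
    push_cast at hn ⊢
    have hx : (1 : ℝ) ≤ f.vars.card := by exact_mod_cast f.one_le_card_vars
    have hy : (1 : ℝ) ≤ g.vars.card := by exact_mod_cast g.one_le_card_vars
    refine (abs_round_mul_sub_mul_le hε (eval_nonneg hw f) (eval_nonneg hw g) ef eg
      (hconj f g)).trans (mul_le_mul_of_nonneg_right ?_ (eval_nonneg hw (conj f g)))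
    linarith [conj_error_factor_le hε hx hy hn]
  | dec x f g ihf ihg =>
    obtain ⟨hx, hf, hg⟩ := hφ
    set m := (f.vars ∪ g.vars).card
    have hcard : (dec x f g).vars.card = m + 1 := Finset.card_insert_of_notMem hx
    have hfm : f.vars.card ≤ m := Finset.card_le_card Finset.subset_union_left
    have hgm : g.vars.card ≤ m := Finset.card_le_card Finset.subset_union_right
    rw [hcard] at hn ⊢
    have branch {ψ : DFormula} (hψm : ψ.vars.card ≤ m) (hψ : ψ.Decomposable)
        (ih : ψ.Decomposable → 4 * (ψ.vars.card : ℝ) ^ 2 * ε ≤ 1 →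
          |Wh ψ - ψ.eval w| ≤ (4 * ψ.vars.card - 2) * ε * ψ.eval w) :
        |Wh ψ - ψ.eval w| ≤ (4 * m - 2) * ε * ψ.eval w :=
      (ih hψ (budget_mono (hψm.trans m.le_succ) hn)).trans (by gcongr; exact eval_nonneg hw ψ)
    obtain ⟨v₁, v₂, h₁, h₂, hr⟩ := hdec x f g
    have e₁ := abs_round_mul_sub_mul_le hε (hw x true) (eval_nonneg hw f) (hlit x true)
      (branch hfm hf ihf) h₁
    have e₂ := abs_round_mul_sub_mul_le hε (hw x false) (eval_nonneg hw g) (hlit x false)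
      (branch hgm hg ihg) h₂
    push_cast at hn ⊢
    have hm : (1 : ℝ) ≤ m := by exact_mod_cast f.one_le_card_vars.trans hfm
    refine (abs_round_add_sub_add_le hε (mul_nonneg (hw x true) (eval_nonneg hw f))
      (mul_nonneg (hw x false) (eval_nonneg hw g)) e₁ e₂ hr).trans
      (mul_le_mul_of_nonneg_right ?_ (eval_nonneg hw (dec x f g)))
    rw [add_sub_cancel]
    linarith [dec_error_factor_le hε hm hn]

end DFormula

/-- Lemma 1: floating-point arithmetic evaluation of a decision-DNNF formula with
nonnegative literal weights, where each rounding introduces relative error at most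
`ε`, yields a result with relative error at most `(4n - 2)·ε` for a formula over
`n ≤ 1/(2√ε)` variables.  Here `w` are the exact weights, `wh` their rounded
floating-point representations, and `Wh` the floating-point evaluation of each
subformula (each operation computes the exact result on its approximate arguments
and then rounds with relative error at most `ε`). -/
theorem decisionDNNF_error_bound
    (w wh : ℕ → Bool → ℝ) (Wh : DFormula → ℝ) (ε : ℝ) (hε : 0 < ε)
    (hwpos : ∀ x b, 0 ≤ w x b)
    (hlit : ∀ x b, relErr (wh x b) (w x b) ≤ ε)
    (hWlit : ∀ x b, Wh (.lit x b) = wh x b)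
    (hconj : ∀ f g, |Wh (.conj f g) - Wh f * Wh g| ≤ ε * |Wh f * Wh g|)
    (hdec : ∀ x f g, ∃ v₁ v₂ : ℝ,
      |v₁ - wh x true * Wh f| ≤ ε * |wh x true * Wh f| ∧
      |v₂ - wh x false * Wh g| ≤ ε * |wh x false * Wh g| ∧
      |Wh (.dec x f g) - (v₁ + v₂)| ≤ ε * |v₁ + v₂|)
    (φ : DFormula) (hdecomp : DFormula.Decomposable φ)
    (hn : ((φ.vars.card : ℝ)) ≤ 1 / (2 * Real.sqrt ε)) :
    relErr (Wh φ) (φ.eval w) ≤ (4 * (φ.vars.card : ℝ) - 2) * ε := by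
  have hcard : (1 : ℝ) ≤ φ.vars.card := by exact_mod_cast φ.one_le_card_vars
  have hbudget : 4 * (φ.vars.card : ℝ) ^ 2 * ε ≤ 1 :=
    calc 4 * (φ.vars.card : ℝ) ^ 2 * ε = (φ.vars.card * (2 * Real.sqrt ε)) ^ 2 := by
          rw [mul_pow, mul_pow, Real.sq_sqrt hε.le]; ring
      _ ≤ 1 := pow_le_one₀ (by positivity) ((le_div_iff₀ (by positivity)).mp hn)
  have hε₁ : ε < 1 := by nlinarith
  have hlit' x b : |wh x b - w x b| ≤ ε * w x b :=
    abs_sub_le_of_relErr_le (hwpos x b) hε₁ (hlit x b)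
  exact relErr_le_of_abs_sub_le (φ.eval_nonneg hwpos) (by nlinarith)
    (DFormula.abs_sub_eval_le hε.le hwpos hlit' hWlit hconj hdec φ hdecomp hbudget)
end

section
/- Let W be rescaled weights satisfying W(x) + W(x̄) = 1 for every variable x. For a smooth deterministic decomposable formula φ, arithmetic evaluation (literals evaluate to their weights, decomposable conjunctions to products, deterministic disjunctions to sums) yields the weighted model count: W evaluated arithmetically on φ equals Σ_{α ∈ M(φ)} Π_{ℓ ∈ α} W(ℓ). -/
/-- Negation normal form formulas over variables `V`: literals, conjunctions,
and disjunctions. -/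
inductive NNF (V : Type) : Type where
  | lit : V → Bool → NNF V
  | and : NNF V → NNF V → NNF V
  | or : NNF V → NNF V → NNF V

namespace NNF

variable {V : Type}

/-- The variables occurring in a formula. -/
def vars [DecidableEq V] : NNF V → Finset V
  | lit x _ => {x}
  | and f g => vars f ∪ vars g
  | or f g => vars f ∪ vars g

/-- Satisfaction of a formula by a total assignment. -/
def sat (α : V → Bool) : NNF V → Bool
  | lit x b => α x == b
  | and f g => sat α f && sat α g
  | or f g => sat α f || sat α g

/-- Decomposability: every conjunction has disjoint variable sets. -/
def Decomposable [DecidableEq V] : NNF V → Prop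
  | lit _ _ => True
  | and f g => Disjoint (vars f) (vars g) ∧ Decomposable f ∧ Decomposable g
  | or f g => Decomposable f ∧ Decomposable g

/-- Determinism: every disjunction has disjoint model sets. -/
def Deterministic : NNF V → Prop
  | lit _ _ => True
  | and f g => Deterministic f ∧ Deterministic g
  | or f g => (∀ α : V → Bool, ¬(sat α f ∧ sat α g)) ∧
      Deterministic f ∧ Deterministic g

/-- Smoothness: every disjunction has equal variable sets. -/
def Smooth [DecidableEq V] : NNF V → Prop
  | lit _ _ => True
  | and f g => Smooth f ∧ Smooth g
  | or f g => vars f = vars g ∧ Smooth f ∧ Smooth g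

/-- Arithmetic evaluation: literals evaluate to their weights, conjunctions to
products, disjunctions to sums. -/
def eval (W : V → Bool → ℝ) : NNF V → ℝ
  | lit x b => W x b
  | and f g => eval W f * eval W g
  | or f g => eval W f + eval W g

end NNF

/-! With normalized weights, `α ↦ ∏ x, W x (α x)` behaves like a product probability
distribution on assignments: its total mass is `1`, and functions of disjoint sets of
variables are independent. Arithmetic evaluation computes the mass of the models of `φ`
bottom-up: a literal `x = b` has mass `W x b`, a decomposable conjunction has the product of
the masses by independence, and a deterministic disjunction has the sum of the masses since
the two model sets are disjoint. -/

open Finset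

section ProductWeight

variable {ι β R : Type*} [DecidableEq ι] {W : ι → β → R}

def piecewiseSwap (s : Finset ι) : Equiv.Perm ((ι → β) × (ι → β)) :=
  Function.Involutive.toPerm (fun p ↦ (s.piecewise p.1 p.2, s.piecewise p.2 p.1)) fun p ↦ by
    ext i <;> by_cases hi : i ∈ s <;> simp [hi]

@[simp]
theorem piecewiseSwap_apply (s : Finset ι) (p : (ι → β) × (ι → β)) :
    piecewiseSwap s p = (s.piecewise p.1 p.2, s.piecewise p.2 p.1) :=
  rfl

variable [Fintype ι] [CommSemiring R]

theorem prod_apply_mul_prod_apply_piecewiseSwap (s : Finset ι) (p : (ι → β) × (ι → β)) :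
    (∏ i, W i ((piecewiseSwap s p).1 i)) * ∏ i, W i ((piecewiseSwap s p).2 i) =
      (∏ i, W i (p.1 i)) * ∏ i, W i (p.2 i) := by
  simp only [← prod_mul_distrib]
  refine prod_congr rfl fun i _ ↦ ?_
  by_cases hi : i ∈ s <;> simp [hi, mul_comm]

variable [Fintype β]

theorem sum_prod_apply_eq_one (hW : ∀ i, ∑ b, W i b = 1) :
    ∑ α : ι → β, ∏ i, W i (α i) = 1 := by
  rw [← Fintype.prod_sum]
  simp [hW]

theorem sum_prod_filter_apply_eq [DecidableEq β] (hW : ∀ i, ∑ b, W i b = 1) (i : ι)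
    (b : β) : ∑ α : ι → β with α i = b, ∏ j, W j (α j) = W i b := by
  rw [← Fintype.piFinset_univ,
    ← Fintype.piFinset_update_singleton_eq_filter_piFinset_eq (fun _ ↦ univ) i (mem_univ b),
    ← prod_univ_sum, Fintype.prod_eq_single i fun j hj ↦ by simp [Function.update_of_ne hj, hW]]
  simp

theorem sum_mul_prod_apply_of_dependsOn (hW : ∀ i, ∑ b, W i b = 1) {F G : (ι → β) → R}
    {s t : Finset ι} (hF : DependsOn F s) (hG : DependsOn G t) (hst : Disjoint s t) :
    ∑ α, F α * G α * ∏ i, W i (α i) =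
      (∑ α, F α * ∏ i, W i (α i)) * ∑ α, G α * ∏ i, W i (α i) := by
  have hFG (p : (ι → β) × (ι → β)) :
      F (piecewiseSwap s p).1 * G (piecewiseSwap s p).1 = F p.1 * G p.2 := by
    congr 1
    · exact hF fun i hi ↦ by simp_all
    · exact hG fun i hi ↦ by simp [disjoint_right.1 hst hi]
  -- Swapping the `s`-coordinates of a pair `(α, β)` gives a pair `(γ, δ)` of the same weight
  -- with `F γ * G γ = F α * G β`.
  calc ∑ α, F α * G α * ∏ i, W i (α i)
      = ∑ p : (ι → β) × (ι → β), F p.1 * G p.1 * ((∏ i, W i (p.1 i)) * ∏ i, W i (p.2 i)) := by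
        simp_rw [Fintype.sum_prod_type, ← mul_sum, sum_prod_apply_eq_one hW, mul_one]
    _ = ∑ p : (ι → β) × (ι → β), F p.1 * G p.2 * ((∏ i, W i (p.1 i)) * ∏ i, W i (p.2 i)) := by
        rw [← Equiv.sum_comp (piecewiseSwap s)]
        simp only [hFG, prod_apply_mul_prod_apply_piecewiseSwap]
    _ = (∑ α, F α * ∏ i, W i (α i)) * ∑ α, G α * ∏ i, W i (α i) := by
        rw [sum_mul_sum, Fintype.sum_prod_type]
        simp only [mul_mul_mul_comm]

end ProductWeight

namespace NNF

variable {V : Type} [DecidableEq V]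

theorem dependsOn_sat (φ : NNF V) : DependsOn (sat · φ) φ.vars := by
  intro α β h
  induction φ with
  | lit x b => simp [sat, h x (by simp [vars])]
  | and f g ihf ihg | or f g ihf ihg =>
    simp only [vars, coe_union, Set.mem_union] at h
    simp only [sat, ihf fun x hx ↦ h x (.inl hx), ihg fun x hx ↦ h x (.inr hx)]

variable [Fintype V]

def wmc (W : V → Bool → ℝ) (φ : NNF V) : ℝ :=
  ∑ α with φ.sat α, ∏ x, W x (α x)

variable {W : V → Bool → ℝ}

theorem wmc_lit (hW : ∀ x, ∑ b, W x b = 1) (x : V) (b : Bool) : wmc W (lit x b) = W x b := by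
  simpa [wmc, sat] using sum_prod_filter_apply_eq hW x b

theorem wmc_and (hW : ∀ x, ∑ b, W x b = 1) {f g : NNF V} (h : Disjoint f.vars g.vars) :
    wmc W (and f g) = wmc W f * wmc W g := by
  have := sum_mul_prod_apply_of_dependsOn hW
    (F := fun α ↦ if f.sat α then 1 else 0) (G := fun α ↦ if g.sat α then 1 else 0)
    (fun _ _ h ↦ congrArg (if · then (1 : ℝ) else 0) (dependsOn_sat f h))
    (fun _ _ h ↦ congrArg (if · then (1 : ℝ) else 0) (dependsOn_sat g h)) h
  simp only [ite_mul, one_mul, zero_mul] at this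
  simpa only [wmc, sat, sum_filter, Bool.and_eq_true, ite_and] using this

theorem wmc_or {f g : NNF V} (h : ∀ α : V → Bool, ¬(f.sat α ∧ g.sat α)) :
    wmc W (or f g) = wmc W f + wmc W g := by
  rw [wmc, wmc, wmc, ← sum_union (disjoint_filter.2 fun α _ ↦ by simpa using h α)]
  simp [sat, filter_or]

theorem eval_eq_wmc (hW : ∀ x, ∑ b, W x b = 1) (φ : NNF V) (hd : φ.Decomposable)
    (hdet : φ.Deterministic) : φ.eval W = wmc W φ := by
  induction φ with
  | lit x b => exact (wmc_lit hW x b).symm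
  | and f g ihf ihg =>
    rw [eval, wmc_and hW hd.1, ihf hd.2.1 hdet.1, ihg hd.2.2 hdet.2]
  | or f g ihf ihg =>
    rw [eval, wmc_or hdet.1, ihf hd.1 hdet.2.1, ihg hd.2 hdet.2.2]

end NNF

theorem ddnnf_eval_eq_wmc_general (V : Type) [Fintype V] [DecidableEq V]
    (W : V → Bool → ℝ) (hW : ∀ x, W x true + W x false = 1)
    (φ : NNF V) (hd : φ.Decomposable) (hdet : φ.Deterministic) :
    φ.eval W = ∑ α ∈ Finset.univ.filter (fun α : V → Bool => φ.sat α),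
      ∏ x, W x (α x) :=
  φ.eval_eq_wmc (fun x ↦ (Fintype.sum_bool _).trans (hW x)) hd hdet

/-- For weights normalized by `W(x) + W(x̄) = 1` and a smooth, deterministic,
decomposable formula `φ`, arithmetic evaluation yields the weighted model count
`Σ_{α ∈ M(φ)} Π_{ℓ ∈ α} W(ℓ)`. -/
theorem ddnnf_eval_eq_wmc (V : Type) [Fintype V] [DecidableEq V]
    (W : V → Bool → ℝ) (hW : ∀ x, W x true + W x false = 1)
    (φ : NNF V) (hd : φ.Decomposable) (hdet : φ.Deterministic) (hsm : φ.Smooth) :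
    φ.eval W = ∑ α ∈ Finset.univ.filter (fun α : V → Bool => φ.sat α),
      ∏ x, W x (α x) :=
  ddnnf_eval_eq_wmc_general V W hW φ hd hdet
end

section
/- In ERD addition, a much smaller addend can be dropped within one unit of double rounding error: if normalized ERD values ⟨d₁, e₁⟩ and ⟨d₂, e₂⟩ (with d₁, d₂ ≠ 0, 1 ≤ |d₁|, |d₂| < 2) satisfy e₁ > 54 + e₂, then |(d₁·2^{e₁} + d₂·2^{e₂}) - d₁·2^{e₁}| ≤ 2^{-53}·|d₁·2^{e₁}|, i.e., returning ⟨d₁, e₁⟩ as the sum has relative error at most 2^{-53}. -/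
section ScaledMantissa

variable {b d : ℝ}

theorem abs_mul_zpow_lt_zpow_add_one (hb : 0 < b) (hd : |d| < b) (e : ℤ) :
    |d * b ^ e| < b ^ (e + 1) := by
  rw [abs_mul, abs_of_pos (zpow_pos hb e), zpow_add_one₀ hb.ne', mul_comm (b ^ e)]
  exact mul_lt_mul_of_pos_right hd (zpow_pos hb e)

theorem zpow_le_abs_mul_zpow (hb : 0 < b) (hd : 1 ≤ |d|) (e : ℤ) :
    b ^ e ≤ |d * b ^ e| := by
  rw [abs_mul, abs_of_pos (zpow_pos hb e)]
  exact le_mul_of_one_le_left (zpow_pos hb e).le hd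

end ScaledMantissa

theorem erd_add_drop_small_general (d₁ d₂ : ℝ) (e₁ e₂ : ℤ)
    (h₁lo : 1 ≤ |d₁|)
    (h₂hi : |d₂| < 2)
    (he : e₁ > 54 + e₂) :
    |(d₁ * (2:ℝ) ^ e₁ + d₂ * (2:ℝ) ^ e₂) - d₁ * (2:ℝ) ^ e₁| ≤
      (2:ℝ) ^ (-53:ℤ) * |d₁ * (2:ℝ) ^ e₁| := by
  calc |(d₁ * (2:ℝ) ^ e₁ + d₂ * (2:ℝ) ^ e₂) - d₁ * (2:ℝ) ^ e₁|
      = |d₂ * (2:ℝ) ^ e₂| := by rw [add_sub_cancel_left]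
    _ ≤ (2:ℝ) ^ (e₂ + 1) := (abs_mul_zpow_lt_zpow_add_one two_pos h₂hi e₂).le
    _ ≤ (2:ℝ) ^ (-53 + e₁) := zpow_le_zpow_right₀ one_le_two (by omega)
    _ = (2:ℝ) ^ (-53:ℤ) * (2:ℝ) ^ e₁ := zpow_add₀ two_ne_zero _ _
    _ ≤ (2:ℝ) ^ (-53:ℤ) * |d₁ * (2:ℝ) ^ e₁| := by
      gcongr
      exact zpow_le_abs_mul_zpow two_pos h₁lo e₁

/-- The ERD addition shortcut: if normalized ERD values `⟨d₁, e₁⟩`, `⟨d₂, e₂⟩`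
(with `1 ≤ |d₁|, |d₂| < 2`) satisfy `e₁ > 54 + e₂`, then dropping the smaller
addend and returning `⟨d₁, e₁⟩` has relative error at most `2^{-53}`. -/
theorem erd_add_drop_small (d₁ d₂ : ℝ) (e₁ e₂ : ℤ)
    (h₁lo : 1 ≤ |d₁|) (h₁hi : |d₁| < 2)
    (h₂lo : 1 ≤ |d₂|) (h₂hi : |d₂| < 2)
    (he : e₁ > 54 + e₂) :
    |(d₁ * (2:ℝ) ^ e₁ + d₂ * (2:ℝ) ^ e₂) - d₁ * (2:ℝ) ^ e₁| ≤
      (2:ℝ) ^ (-53:ℤ) * |d₁ * (2:ℝ) ^ e₁| :=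
  erd_add_drop_small_general d₁ d₂ e₁ e₂ h₁lo h₂hi he
end

section
/- If the fraction size p satisfies p ≥ D·log₂ 10 + log₂ n + log₂ 7 and the relative evaluation error is at most (7n-4)·2^{-p} with 7n·2^{-p} < 1, then the decimal precision of the computed weighted count is at least D. -/
/-- Decimal precision of an approximation. -/
noncomputable def decPrec (xh x : ℝ) : ℝ :=
  max 0 (-Real.logb 10 (relErr xh x))

open Real

lemma le_decPrec_of_relErr_le_rpow {xh x D : ℝ} (hpos : 0 < relErr xh x)
    (h : relErr xh x ≤ (10 : ℝ) ^ (-D)) : D ≤ decPrec xh x := by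
  have hlog : logb 10 (relErr xh x) ≤ -D := (logb_le_iff_le_rpow (by norm_num) hpos).mpr h
  exact le_max_of_le_right (by linarith)

lemma mul_two_zpow_neg_le_ten_rpow_neg {c D : ℝ} {p : ℤ} (hc : 0 < c)
    (hp : D * logb 2 10 + logb 2 c ≤ p) : c * (2 : ℝ) ^ (-p) ≤ (10 : ℝ) ^ (-D) :=
  calc c * (2 : ℝ) ^ (-p) = (2 : ℝ) ^ (logb 2 c - p) := by
        rw [rpow_sub (by norm_num), rpow_logb (by norm_num) (by norm_num) hc, zpow_neg,
          rpow_intCast, div_eq_mul_inv]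
    _ ≤ (2 : ℝ) ^ (-D * logb 2 10) := rpow_le_rpow_of_exponent_le (by norm_num) (by linarith)
    _ = (10 : ℝ) ^ (-D) := by
        rw [mul_comm, rpow_mul (by norm_num), rpow_logb (by norm_num) (by norm_num) (by norm_num)]

theorem target_precision_achieved_general (v vh : ℝ) (p n : ℕ) (D : ℝ)
    (hn : 1 ≤ n)
    (hp : (p:ℝ) ≥ D * Real.logb 2 10 + Real.logb 2 n + Real.logb 2 7)
    (hδpos : 0 < relErr vh v)
    (hδ : relErr vh v ≤ (7 * (n:ℝ) - 4) * (2:ℝ) ^ (-(p:ℤ))) :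
    decPrec vh v ≥ D := by
  have hn₀ : (0 : ℝ) < n := by exact_mod_cast hn
  have hp' : D * logb 2 10 + logb 2 (7 * n) ≤ ((p : ℤ) : ℝ) := by
    rw [logb_mul (by norm_num) hn₀.ne']
    push_cast
    linarith
  refine le_decPrec_of_relErr_le_rpow hδpos (hδ.trans ?_)
  calc (7 * (n : ℝ) - 4) * (2 : ℝ) ^ (-(p : ℤ)) ≤ 7 * n * (2 : ℝ) ^ (-(p : ℤ)) := by
        gcongr; linarith
    _ ≤ (10 : ℝ) ^ (-D) := mul_two_zpow_neg_le_ten_rpow_neg (by positivity) hp'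

/-- Choosing fraction size `p ≥ D·log₂ 10 + log₂ n + log₂ 7` guarantees target
decimal precision `D`, given a relative evaluation error of at most
`(7n - 4)·2^{-p}` with `7n·2^{-p} < 1`. -/
theorem target_precision_achieved (v vh : ℝ) (p n : ℕ) (D : ℝ)
    (hn : 1 ≤ n)
    (hp : (p:ℝ) ≥ D * Real.logb 2 10 + Real.logb 2 n + Real.logb 2 7)
    (hδpos : 0 < relErr vh v)
    (hδ : relErr vh v ≤ (7 * (n:ℝ) - 4) * (2:ℝ) ^ (-(p:ℤ)))
    (h7 : 7 * (n:ℝ) * (2:ℝ) ^ (-(p:ℤ)) < 1) :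
    decPrec vh v ≥ D :=
  target_precision_achieved_general v vh p n D hn hp hδpos hδ
end
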